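/- For every binary tree T with at least 2 leaves, the order of its automorphism group satisfies |A(T)| ≤ 2^{2c(T)−1}, where c(T) is the number of cherries of T. (This follows by induction from the recursion |A(T)| = |A(T_1)||A(T_2)| when the two root branches T_1, T_2 of T are non-isomorphic, and |A(T)| = 2|A(T_1)|^2 when they are isomorphic.) -/
import Mathlib


open scoped Classical

inductive PTree : Type
  | leaf : PTree
  | node : PTree → PTree → PTree
deriving DecidableEq

namespace PTree

def size : PTree → ℕ
  | leaf => 1
  | node l r => size l + size r

def cherries : PTree → ℕ
  | leaf => 0
  | node leaf leaf => 1
  | node l r => cherries l + cherries r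

def height : PTree → ℕ
  | leaf => 0
  | node l r => max (height l) (height r) + 1

def encode : PTree → ℕ
  | leaf => 0
  | node l r => Nat.pair (encode l) (encode r) + 1

def normalize : PTree → PTree
  | leaf => leaf
  | node l r =>
      let l' := normalize l
      let r' := normalize r
      if encode l' ≤ encode r' then node l' r' else node r' l'

def isoFuns : PTree → PTree → List (ℕ → ℕ)
  | leaf, leaf => [fun i => i]
  | node l r, node l' r' =>
      ((isoFuns l l').flatMap fun g => (isoFuns r r').map fun h =>
        fun i => if i < l.size then g i else h (i - l.size) + l'.size)
      ++
      ((isoFuns l r').flatMap fun g => (isoFuns r l').map fun h =>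
        fun i => if i < l.size then g i + l'.size else h (i - l.size))
  | _, _ => []

def planeTrees : ℕ → Finset PTree
  | 0 => ∅
  | 1 => {leaf}
  | n + 2 =>
      (Finset.range (n + 1)).attach.biUnion fun k =>
        ((planeTrees (k.1 + 1)) ×ˢ (planeTrees (n + 1 - k.1))).image
          fun p => node p.1 p.2
  termination_by n => n
  decreasing_by
  · have := Finset.mem_range.mp k.2; omega
  · omega

def binTrees (n : ℕ) : Finset PTree := (planeTrees n).image normalize

/-- Triples (T, v, S): left plane tree, right plane tree, and a matching `v`
(a permutation of `0, …, n-1`, encoded as the list of its values) matching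
leaf `i` of `T` with leaf `v i` of `S`. -/
def Triples (n : ℕ) : Finset (PTree × PTree × List ℕ) :=
  (planeTrees n) ×ˢ ((planeTrees n) ×ˢ (List.range n).permutations.toFinset)

/-- Two triples represent the same tanglegram iff there are isomorphisms of the left
trees and of the right trees compatible with the matchings. -/
def equivTriple (n : ℕ) (t t' : PTree × PTree × List ℕ) : Bool :=
  (isoFuns t.1 t'.1).any fun φ => (isoFuns t.2.1 t'.2.1).any fun ψ =>
    (List.range n).all fun i => t'.2.2.getD (φ i) 0 == ψ (t.2.2.getD i 0)

/-- The tanglegrams of size `n`: equivalence classes of triples. -/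
def tangleClasses (n : ℕ) : Finset (Finset (PTree × PTree × List ℕ)) :=
  (Triples n).image fun t => (Triples n).filter (fun t' => equivTriple n t t' = true)

/-- The number of tanglegrams of size `n`. -/
def numTanglegrams (n : ℕ) : ℕ := (tangleClasses n).card

/-- The probability that a uniformly random tanglegram of size `n` satisfies the
(isomorphism-invariant) property `P` of triples. -/
noncomputable def tangleProb (n : ℕ) (P : PTree × PTree × List ℕ → Prop) : ℝ :=
  ((tangleClasses n).filter fun c => ∃ t ∈ c, P t).card / numTanglegrams n

/-- The expectation of the statistic `f` of a uniformly random tanglegram of size `n`. -/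
noncomputable def tangleExp (n : ℕ) (f : PTree × PTree × List ℕ → ℕ) : ℝ :=
  ∑' k : ℕ, (k : ℝ) * tangleProb n (fun t => f t = k)

end PTree

namespace PTree

/-- The distribution on pairs of binary trees (canonical representatives) induced by
the two halves of a uniformly random tanglegram of size `n`:
probability that the pair of isomorphism classes of the two trees lies in `S`. -/
noncomputable def nuT (n : ℕ) (S : Finset (PTree × PTree)) : ℝ :=
  tangleProb n fun t => (normalize t.1, normalize t.2.1) ∈ S

/-- The distribution on pairs of binary trees induced by two independent uniformly
random plane binary trees with `n` leaves. -/
noncomputable def nuP (n : ℕ) (S : Finset (PTree × PTree)) : ℝ :=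
  (((planeTrees n) ×ˢ (planeTrees n)).filter
      fun p => (normalize p.1, normalize p.2) ∈ S).card / ((planeTrees n).card ^ 2 : ℝ)

/-- The total variation distance between `nuT` and `nuP`. -/
noncomputable def tvDist (n : ℕ) : ℝ :=
  ((binTrees n ×ˢ binTrees n).powerset).sup' (Finset.powerset_nonempty _)
    fun S => |nuT n S - nuP n S|

/-- The number of occurrences of (trees isomorphic to) `B` as a fringe subtree of `T`. -/
def occ (B : PTree) : PTree → ℕ
  | leaf => if normalize leaf = normalize B then 1 else 0
  | node l r => (if normalize (node l r) = normalize B then 1 else 0) + occ B l + occ B r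

/-- The number of generators of the automorphism group of `T`: the number of internal
vertices whose two branches are isomorphic. -/
def gens : PTree → ℕ
  | leaf => 0
  | node l r => (if normalize l = normalize r then 1 else 0) + gens l + gens r

/-- `T` has a root branch isomorphic to `B`. -/
def hasBranch (B : PTree) : PTree → Prop
  | leaf => False
  | node l r => normalize l = normalize B ∨ normalize r = normalize B

/-- The cherries of a plane binary tree whose leaves are numbered from `k` on
(left to right), as pairs of leaf positions. -/
def cherryList : PTree → ℕ → List (ℕ × ℕ)
  | leaf, _ => []
  | node leaf leaf, k => [(k, k + 1)]
  | node l r, k => cherryList l k ++ cherryList r (k + l.size)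

/-- The number of matched cherries: cherries of `T` whose two leaves are matched by `L`
to the two leaves of a cherry of `S`. -/
def matchedCherries (T S : PTree) (L : List ℕ) : ℕ :=
  (cherryList T 0).countP fun p =>
    (cherryList S 0).any fun q =>
      (L.getD p.1 0 == q.1 && L.getD p.2 0 == q.2) ||
      (L.getD p.1 0 == q.2 && L.getD p.2 0 == q.1)

/-- The number of automorphisms of the tanglegram represented by the triple `(T, L, S)`:
pairs of automorphisms of the two trees compatible with the matching `L`. -/
def tangleAutCount (T S : PTree) (L : List ℕ) : ℕ :=
  ((isoFuns T T).map fun a =>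
    (isoFuns S S).countP fun b =>
      (List.range T.size).all fun i => L.getD (a i) 0 == b (L.getD i 0)).sum

/-- The number of automorphisms of `T` whose cycle type is `μ(s) = 2^s 1^(n-2s)`,
i.e. involutions of the leaves moving exactly `2 s` leaves. -/
def autMuCount (T : PTree) (s : ℕ) : ℕ :=
  (isoFuns T T).countP fun f =>
    ((List.range T.size).all fun i => f (f i) == i) &&
    ((List.range T.size).countP fun i => !(f i == i)) == 2 * s

end PTree


open PTree in
lemma PTree.isoFuns_node_length (l r l' r' : PTree) :
    (isoFuns (node l r) (node l' r')).length =
      (isoFuns l l').length * (isoFuns r r').length +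
      (isoFuns l r').length * (isoFuns r l').length := by
  simp [isoFuns, List.length_flatMap, Function.comp_def, List.map_const', mul_comm]

open PTree in
lemma PTree.one_le_cherries : ∀ t : PTree, t ≠ leaf → 1 ≤ cherries t := by
  intro t
  induction t with
  | leaf => simp
  | node l r ihl ihr =>
    intro _
    rcases l with _ | ⟨a, b⟩
    · rcases r with _ | ⟨c, d⟩
      · simp [cherries]
      · have := ihr (by simp)
        simp [cherries]; omega
    · have := ihl (by simp)
      rcases r with _ | ⟨c, d⟩ <;> simp [cherries] <;> omega

open PTree in
lemma PTree.cherries_node (l r : PTree) (h : l ≠ leaf ∨ r ≠ leaf) :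
    cherries (node l r) = cherries l + cherries r := by
  rcases l with _ | ⟨a, b⟩ <;> rcases r with _ | ⟨c, d⟩ <;> simp [cherries] at h ⊢

open PTree in
lemma PTree.isoFuns_bound : ∀ a b : PTree, a ≠ leaf → b ≠ leaf →
    (isoFuns a b).length ≤ 2 ^ (a.cherries + b.cherries - 1) := by
  intro a
  induction a with
  | leaf => simp
  | node l r ihl ihr =>
    intro b _ hb
    rcases b with _ | ⟨l', r'⟩
    · exact absurd rfl hb
    rw [PTree.isoFuns_node_length]
    rcases l with _ | ⟨la, lb⟩
    · rcases r with _ | ⟨ra, rb⟩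
      · -- a is a cherry
        rcases l' with _ | ⟨x, y⟩
        · rcases r' with _ | ⟨x, y⟩
          · -- b is a cherry: value is 1*1+1*1 = 2
            simp [isoFuns, cherries]
          · have h1 : (isoFuns leaf (node x y)).length = 0 := rfl
            have h2 : 1 ≤ cherries (node x y) := PTree.one_le_cherries _ (by simp)
            simp [h1, cherries_node, Nat.one_le_two_pow]
        · have h1 : (isoFuns leaf (node x y)).length = 0 := rfl
          simp [h1]
      · -- l = leaf, r = node ra rb
        have hr : (PTree.node ra rb) ≠ leaf := by simp
        have hcr := PTree.one_le_cherries _ hr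
        have hca : cherries (node leaf (node ra rb)) = cherries (node ra rb) := by
          rw [cherries_node _ _ (Or.inr hr)]; simp [cherries]
        rcases l' with _ | ⟨x, y⟩
        · rcases r' with _ | ⟨u, v⟩
          · have h1 : (isoFuns (node ra rb) leaf).length = 0 := rfl
            simp [h1]
          · have hr' : (PTree.node u v) ≠ leaf := by simp
            have hcb : cherries (node leaf (node u v)) = cherries (node u v) := by
              rw [cherries_node _ _ (Or.inr hr')]; simp [cherries]
            have h1 : (isoFuns leaf (node u v)).length = 0 := rfl
            have h2 : (isoFuns leaf leaf).length = 1 := rfl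
            rw [h1, h2, hca, hcb]
            have := ihr (node u v) hr hr'
            simpa using this
        · have hl' : (PTree.node x y) ≠ leaf := by simp
          have h1 : (isoFuns leaf (node x y)).length = 0 := rfl
          rcases r' with _ | ⟨u, v⟩
          · have hcb : cherries (node (node x y) leaf) = cherries (node x y) := by
              rw [cherries_node _ _ (Or.inl hl')]; simp [cherries]
            have h2 : (isoFuns leaf leaf).length = 1 := rfl
            rw [h1, h2, hca, hcb]
            have := ihr (node x y) hr hl'
            simpa using this
          · have h2 : (isoFuns leaf (node u v)).length = 0 := rfl
            simp [h1, h2]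
    · -- l = node la lb
      have hl : (PTree.node la lb) ≠ leaf := by simp
      rcases r with _ | ⟨ra, rb⟩
      · -- r = leaf
        have hca : cherries (node (node la lb) leaf) = cherries (node la lb) := by
          rw [cherries_node _ _ (Or.inl hl)]; simp [cherries]
        rcases l' with _ | ⟨x, y⟩
        · rcases r' with _ | ⟨u, v⟩
          · have h1 : (isoFuns (node la lb) leaf).length = 0 := rfl
            simp [h1]
          · have hr' : (PTree.node u v) ≠ leaf := by simp
            have hcb : cherries (node leaf (node u v)) = cherries (node u v) := by
              rw [cherries_node _ _ (Or.inr hr')]; simp [cherries]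
            have h1 : (isoFuns (node la lb) leaf).length = 0 := rfl
            have h2 : (isoFuns leaf leaf).length = 1 := rfl
            rw [h1, h2, hca, hcb]
            have := ihl (node u v) hl hr'
            simpa using this
        · have hl' : (PTree.node x y) ≠ leaf := by simp
          rcases r' with _ | ⟨u, v⟩
          · have hcb : cherries (node (node x y) leaf) = cherries (node x y) := by
              rw [cherries_node _ _ (Or.inl hl')]; simp [cherries]
            have h1 : (isoFuns leaf leaf).length = 1 := rfl
            have h2 : (isoFuns (node la lb) leaf).length = 0 := rfl
            rw [h2, h1, hca, hcb]
            have := ihl (node x y) hl hl'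
            simpa using this
          · have h1 : (isoFuns leaf (node x y)).length = 0 := rfl
            have h2 : (isoFuns leaf (node u v)).length = 0 := rfl
            simp [h1, h2]
      · -- l, r both nodes
        have hr : (PTree.node ra rb) ≠ leaf := by simp
        rcases l' with _ | ⟨x, y⟩
        · have h1 : (isoFuns (node la lb) leaf).length = 0 := rfl
          have h2 : (isoFuns (node ra rb) leaf).length = 0 := rfl
          simp [h1, h2]
        · have hl' : (PTree.node x y) ≠ leaf := by simp
          rcases r' with _ | ⟨u, v⟩
          · have h1 : (isoFuns (node ra rb) leaf).length = 0 := rfl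
            have h2 : (isoFuns (node la lb) leaf).length = 0 := rfl
            simp [h1, h2]
          · have hr' : (PTree.node u v) ≠ leaf := by simp
            have c1 := PTree.one_le_cherries _ hl
            have c2 := PTree.one_le_cherries _ hr
            have c3 := PTree.one_le_cherries _ hl'
            have c4 := PTree.one_le_cherries _ hr'
            have b1 := ihl (node x y) hl hl'
            have b2 := ihr (node u v) hr hr'
            have b3 := ihl (node u v) hl hr'
            have b4 := ihr (node x y) hr hl'
            have hca : cherries (node (node la lb) (node ra rb)) =
                cherries (node la lb) + cherries (node ra rb) :=
              cherries_node _ _ (Or.inl hl)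
            have hcb : cherries (node (node x y) (node u v)) =
                cherries (node x y) + cherries (node u v) :=
              cherries_node _ _ (Or.inl hl')
            rw [hca, hcb]
            set cl := cherries (node la lb)
            set cr := cherries (node ra rb)
            set cl' := cherries (node x y)
            set cr' := cherries (node u v)
            calc (isoFuns (node la lb) (node x y)).length *
                  (isoFuns (node ra rb) (node u v)).length +
                  (isoFuns (node la lb) (node u v)).length *
                  (isoFuns (node ra rb) (node x y)).length
                ≤ 2 ^ (cl + cl' - 1) * 2 ^ (cr + cr' - 1) +
                  2 ^ (cl + cr' - 1) * 2 ^ (cr + cl' - 1) :=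
                  Nat.add_le_add (Nat.mul_le_mul b1 b2) (Nat.mul_le_mul b3 b4)
              _ = 2 ^ (cl + cl' - 1 + (cr + cr' - 1)) +
                  2 ^ (cl + cr' - 1 + (cr + cl' - 1)) := by rw [pow_add, pow_add]
              _ = 2 ^ (cl + cr + (cl' + cr') - 2) + 2 ^ (cl + cr + (cl' + cr') - 2) := by
                  congr 2 <;> omega
              _ = 2 ^ (cl + cr + (cl' + cr') - 2 + 1) := by ring
              _ = 2 ^ (cl + cr + (cl' + cr') - 1) := by congr 1; omega

open PTree in
/-- The order of the automorphism group of a binary tree with at least 2 leaves is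
at most `2^(2c(T)-1)`, where `c(T)` is the number of cherries. -/
theorem autCount_le_two_pow (T : PTree) (h : 2 ≤ T.size) :
    (isoFuns T T).length ≤ 2 ^ (2 * T.cherries - 1) := by
  have hT : T ≠ leaf := by
    rintro rfl
    simp [size] at h
  have := PTree.isoFuns_bound T T hT hT
  have h2 : T.cherries + T.cherries - 1 = 2 * T.cherries - 1 := by omega
  rwa [h2] at this
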